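/- arXiv:cs/0003028 — 2 statements merged into one kernel-verified Lean document; each statement's English description precedes it below -/
import Mathlib

section
/- Let Π be an ordered logic program, X a consistent answer set of 𝒯(Π), and Ω = 𝒯(Π)^X. For any rule r ∈ Π: if ok(n_r) ∉ T_Ω^i(∅), then ap(n_r) ∉ T_Ω^j(∅) and bl(n_r) ∉ T_Ω^k(∅) for all j, k < i + 2. -/
attribute [local instance] Classical.propDecidable

/-! ## Basic framework: extended logic programs under answer set semantics -/

/-- A literal: an atom or a classically negated atom. -/
inductive Lit (σ : Type) : Type
  | pos (a : σ)
  | neg (a : σ)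
  deriving DecidableEq

/-- An extended rule: head ← pbody, not nbody. -/
structure Rule (σ : Type) : Type where
  head : Lit σ
  pbody : Set (Lit σ)
  nbody : Set (Lit σ)

/-- A set of literals is consistent iff it contains no complementary pair. -/
def Consistent {σ : Type} (X : Set (Lit σ)) : Prop :=
  ∀ a : σ, ¬ (Lit.pos a ∈ X ∧ Lit.neg a ∈ X)

/-- Logically closed: consistent or all literals. -/
def LogClosed {σ : Type} (X : Set (Lit σ)) : Prop :=
  Consistent X ∨ X = Set.univ

/-- A program is basic if no rule has weakly negated body literals. -/
def Basic {σ : Type} (P : Set (Rule σ)) : Prop :=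
  ∀ r ∈ P, r.nbody = ∅

/-- Closure of a set of literals under a (basic) program. -/
def ClosedUnder {σ : Type} (P : Set (Rule σ)) (X : Set (Lit σ)) : Prop :=
  ∀ r ∈ P, r.pbody ⊆ X → r.head ∈ X

/-- Th(P): smallest logically closed set closed under the basic program P. -/
def Th {σ : Type} (P : Set (Rule σ)) : Set (Lit σ) :=
  ⋂₀ {X | LogClosed X ∧ ClosedUnder P X}

/-- The immediate consequence operator T_P. -/
noncomputable def TOp {σ : Type} (P : Set (Rule σ)) (X : Set (Lit σ)) : Set (Lit σ) :=
  if _ : Consistent X then {L | ∃ r ∈ P, r.pbody ⊆ X ∧ r.head = L} else Set.univ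

/-- Iterates of the immediate consequence operator, starting from a given set. -/
def TIter {σ : Type} (P : Set (Rule σ)) (X : Set (Lit σ)) : ℕ → Set (Lit σ)
  | 0 => X
  | (i+1) => TOp P (TIter P X i)

/-- Rule r is defeated by X iff nbody(r) ∩ X ≠ ∅. -/
def Defeated {σ : Type} (r : Rule σ) (X : Set (Lit σ)) : Prop :=
  (r.nbody ∩ X).Nonempty

/-- The basic rule r⁺ obtained by deleting all weakly negated body literals. -/
def reductRule {σ : Type} (r : Rule σ) : Rule σ :=
  ⟨r.head, r.pbody, ∅⟩

/-- The Gelfond–Lifschitz reduct of P relative to X. -/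
def Reduct {σ : Type} (P : Set (Rule σ)) (X : Set (Lit σ)) : Set (Rule σ) :=
  {r' | ∃ r ∈ P, ¬ Defeated r X ∧ r' = reductRule r}

/-- X is an answer set of P iff Th(Pˣ) = X. -/
def AnswerSet {σ : Type} (P : Set (Rule σ)) (X : Set (Lit σ)) : Prop :=
  Th (Reduct P X) = X

/-- Generating rules of an answer set X from P. -/
def GR {σ : Type} (P : Set (Rule σ)) (X : Set (Lit σ)) : Set (Rule σ) :=
  {r | r ∈ P ∧ ¬ Defeated r X ∧ r.pbody ⊆ X}

/-- An enumeration of a set of rules. -/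
def IsEnum {σ I : Type} (e : I → Rule σ) (S : Set (Rule σ)) : Prop :=
  Function.Injective e ∧ Set.range e = S

/-- A grounded sequence of rules. -/
def Grounded {σ I : Type} [LT I] (e : I → Rule σ) : Prop :=
  ∀ i : I, ¬ Consistent {L | ∃ j < i, (e j).head = L} ∨
    (e i).pbody ⊆ {L | ∃ j < i, (e j).head = L}
/-! ## Ordered logic programs and the translation 𝒯 -/

/-- Atoms of the language of an ordered program: regular atoms from `α`
plus preference atoms `s ≺ t` over names from `N`. -/
abbrev OAtom (α N : Type) : Type := α ⊕ (N × N)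

/-- Atoms of the extended language ℒ⁺ of the translated program:
the original atoms plus the control atoms ap, bl, ok, ok'. -/
inductive XAtom (α N : Type) : Type
  | base (a : α)
  | prec (s t : N)
  | ap (s : N)
  | bl (s : N)
  | ok (s : N)
  | ok2 (s t : N)

/-- Map literals along a map of atoms. -/
def Lit.map {σ σ' : Type} (f : σ → σ') : Lit σ → Lit σ'
  | .pos a => .pos (f a)
  | .neg a => .neg (f a)

/-- Embedding of the atoms of the ordered program into the extended language. -/
def embAtom {α N : Type} : OAtom α N → XAtom α N
  | Sum.inl a => .base a
  | Sum.inr (s, t) => .prec s t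

/-- Embedding of literals of ℒ into ℒ⁺. -/
def embLit {α N : Type} : Lit (OAtom α N) → Lit (XAtom α N) :=
  Lit.map embAtom

/-- An ordered logic program: rules over ℒ together with an
(injective) naming function. -/
structure OProgram (α N : Type) : Type where
  rules : Set (Rule (OAtom α N))
  nm : Rule (OAtom α N) → N
  inj : Set.InjOn nm rules

section Translation

variable {α N : Type}

/-- The preference literal n ≺ n' in the translated language. -/
def pLit (s t : N) : Lit (XAtom α N) := .pos (.prec s t)

/-- a1(r) : head(r) ← ap(n_r). -/
def a1 (nm : Rule (OAtom α N) → N) (r : Rule (OAtom α N)) : Rule (XAtom α N) :=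
  ⟨embLit r.head, {.pos (.ap (nm r))}, ∅⟩

/-- a2(r) : ap(n_r) ← ok(n_r), body(r). -/
def a2 (nm : Rule (OAtom α N) → N) (r : Rule (OAtom α N)) : Rule (XAtom α N) :=
  ⟨.pos (.ap (nm r)), insert (.pos (.ok (nm r))) (embLit '' r.pbody), embLit '' r.nbody⟩

/-- b1(r, L⁺) : bl(n_r) ← ok(n_r), not L⁺, for L⁺ ∈ body⁺(r). -/
def b1 (nm : Rule (OAtom α N) → N) (r : Rule (OAtom α N)) (L : Lit (OAtom α N)) :
    Rule (XAtom α N) :=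
  ⟨.pos (.bl (nm r)), {.pos (.ok (nm r))}, {embLit L}⟩

/-- b2(r, L⁻) : bl(n_r) ← ok(n_r), L⁻, for L⁻ ∈ body⁻(r). -/
def b2 (nm : Rule (OAtom α N) → N) (r : Rule (OAtom α N)) (L : Lit (OAtom α N)) :
    Rule (XAtom α N) :=
  ⟨.pos (.bl (nm r)), {.pos (.ok (nm r)), embLit L}, ∅⟩

/-- c1(r) : ok(n_r) ← ok'(n_r, n_{r₁}), …, ok'(n_r, n_{r_k}). -/
def c1 (P : Set (Rule (OAtom α N))) (nm : Rule (OAtom α N) → N)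
    (r : Rule (OAtom α N)) : Rule (XAtom α N) :=
  ⟨.pos (.ok (nm r)), {L | ∃ r' ∈ P, L = .pos (.ok2 (nm r) (nm r'))}, ∅⟩

/-- c2(r, r') : ok'(n_r, n_{r'}) ← not (n_r ≺ n_{r'}). -/
def c2 (nm : Rule (OAtom α N) → N) (r r' : Rule (OAtom α N)) : Rule (XAtom α N) :=
  ⟨.pos (.ok2 (nm r) (nm r')), ∅, {pLit (nm r) (nm r')}⟩

/-- c3(r, r') : ok'(n_r, n_{r'}) ← (n_r ≺ n_{r'}), ap(n_{r'}). -/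
def c3 (nm : Rule (OAtom α N) → N) (r r' : Rule (OAtom α N)) : Rule (XAtom α N) :=
  ⟨.pos (.ok2 (nm r) (nm r')), {pLit (nm r) (nm r'), .pos (.ap (nm r'))}, ∅⟩

/-- c4(r, r') : ok'(n_r, n_{r'}) ← (n_r ≺ n_{r'}), bl(n_{r'}). -/
def c4 (nm : Rule (OAtom α N) → N) (r r' : Rule (OAtom α N)) : Rule (XAtom α N) :=
  ⟨.pos (.ok2 (nm r) (nm r')), {pLit (nm r) (nm r'), .pos (.bl (nm r'))}, ∅⟩

/-- t(r, r', r'') : (n_r ≺ n_{r''}) ← (n_r ≺ n_{r'}), (n_{r'} ≺ n_{r''}). -/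
def trR (nm : Rule (OAtom α N) → N) (r r' r'' : Rule (OAtom α N)) : Rule (XAtom α N) :=
  ⟨pLit (nm r) (nm r''), {pLit (nm r) (nm r'), pLit (nm r') (nm r'')}, ∅⟩

/-- as(r, r') : ¬(n_{r'} ≺ n_r) ← (n_r ≺ n_{r'}). -/
def asR (nm : Rule (OAtom α N) → N) (r r' : Rule (OAtom α N)) : Rule (XAtom α N) :=
  ⟨.neg (.prec (nm r') (nm r)), {pLit (nm r) (nm r')}, ∅⟩

/-- The translation 𝒯 of an ordered logic program. -/
def Tsl (P : OProgram α N) : Set (Rule (XAtom α N)) :=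
  {R | ∃ r ∈ P.rules,
      R = a1 P.nm r ∨ R = a2 P.nm r ∨ R = c1 P.rules P.nm r ∨
      (∃ L ∈ r.pbody, R = b1 P.nm r L) ∨ (∃ L ∈ r.nbody, R = b2 P.nm r L) ∨
      (∃ r' ∈ P.rules,
        R = c2 P.nm r r' ∨ R = c3 P.nm r r' ∨ R = c4 P.nm r r' ∨ R = asR P.nm r r' ∨
        (∃ r'' ∈ P.rules, R = trR P.nm r r' r''))}

/-- X is a preferred answer set of the ordered program P iff
X = Y ∩ ℒ for some answer set Y of 𝒯(P). -/
def PreferredAS (P : OProgram α N) (X : Set (Lit (OAtom α N))) : Prop :=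
  ∃ Y : Set (Lit (XAtom α N)), AnswerSet (Tsl P) Y ∧ X = embLit ⁻¹' Y

/-- A literal over ℒ mentions no preference atom. -/
def PrecFree (L : Lit (OAtom α N)) : Prop :=
  ∃ a : α, L = .pos (Sum.inl a) ∨ L = .neg (Sum.inl a)

/-- A rule over ℒ mentions no preference atom. -/
def PrecFreeRule (r : Rule (OAtom α N)) : Prop :=
  PrecFree r.head ∧ (∀ L ∈ r.pbody, PrecFree L) ∧ (∀ L ∈ r.nbody, PrecFree L)

/-- The fact (n_r ≺ n_{r'}) ← . -/
def precFact (nm : Rule (OAtom α N) → N) (r r' : Rule (OAtom α N)) :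
    Rule (OAtom α N) :=
  ⟨.pos (Sum.inr (nm r, nm r')), ∅, ∅⟩

/-- The statically ordered program (Π, <) viewed as the ordered program
Π ∪ { (n_r ≺ n_{r'}) ← ∣ r < r' }. -/
def statProgram (P : Set (Rule (OAtom α N))) (lt : Rule (OAtom α N) → Rule (OAtom α N) → Prop)
    (nm : Rule (OAtom α N) → N)
    (hinj : Set.InjOn nm (P ∪ {s | ∃ r ∈ P, ∃ r' ∈ P, lt r r' ∧ s = precFact nm r r'})) :
    OProgram α N :=
  ⟨P ∪ {s | ∃ r ∈ P, ∃ r' ∈ P, lt r r' ∧ s = precFact nm r r'}, nm, hinj⟩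

/-- X is a preferred answer set of the statically ordered program (Π, <):
X is the restriction to the original (preference-free) language ℒ of an
answer set of the translation of Π ∪ { (n_r ≺ n_{r'}) ← ∣ r < r' }. -/
def StatPreferredAS (P : Set (Rule (OAtom α N)))
    (lt : Rule (OAtom α N) → Rule (OAtom α N) → Prop)
    (nm : Rule (OAtom α N) → N)
    (hinj : Set.InjOn nm (P ∪ {s | ∃ r ∈ P, ∃ r' ∈ P, lt r r' ∧ s = precFact nm r r'}))
    (X : Set (Lit (OAtom α N))) : Prop :=
  ∃ Y : Set (Lit (XAtom α N)),
    AnswerSet (Tsl (statProgram P lt nm hinj)) Y ∧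
    X = {L | PrecFree L ∧ embLit L ∈ Y}

/-- The relation ≺_X induced on rules by a set X of literals of ℒ⁺. -/
def PrecRel (nm : Rule (OAtom α N) → N) (X : Set (Lit (XAtom α N)))
    (r r' : Rule (OAtom α N)) : Prop :=
  pLit (nm r) (nm r') ∈ X

/-- An answer set X of Π is <-preserving. -/
def PreservingAS (P : Set (Rule (OAtom α N)))
    (lt : Rule (OAtom α N) → Rule (OAtom α N) → Prop)
    (X : Set (Lit (OAtom α N))) : Prop :=
  AnswerSet P X ∧
    (¬ Consistent X ∨
      ∃ (I : Type) (_ : LinearOrder I) (e : I → Rule (OAtom α N)),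
        IsEnum e (GR P X) ∧ Grounded e ∧
        (∀ i j : I, lt (e i) (e j) → j < i) ∧
        (∀ i : I, ∀ r' : Rule (OAtom α N), r' ∈ P \ GR P X → lt (e i) r' →
          ¬ (r'.pbody ⊆ X) ∨ Defeated r' {L | ∃ j < i, (e j).head = L}))

/-- The rule r, viewed as a rule of the extended language ℒ⁺. -/
def embRule {α N : Type} (r : Rule (OAtom α N)) : Rule (XAtom α N) :=
  ⟨embLit r.head, embLit '' r.pbody, embLit '' r.nbody⟩

/-- An ordered program has only static preferences: every rule either mentions
no preference atom at all, or is a fact (n ≺ n') ← . -/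
def StaticallyOrdered {α N : Type} (P : OProgram α N) : Prop :=
  ∀ r ∈ P.rules, PrecFreeRule r ∨ ∃ s t : N, r = ⟨.pos (Sum.inr (s, t)), ∅, ∅⟩
lemma Consistent.mono' {σ : Type} {X Y : Set (Lit σ)} (h : X ⊆ Y) (hY : Consistent Y) :
    Consistent X := fun a ⟨h1, h2⟩ => hY a ⟨h h1, h h2⟩

lemma TOp_mono {σ : Type} {P : Set (Rule σ)} {X Y : Set (Lit σ)} (h : X ⊆ Y) :
    TOp P X ⊆ TOp P Y := by
  unfold TOp
  by_cases hx : Consistent X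
  · by_cases hy : Consistent Y
    · simp only [dif_pos hx, dif_pos hy]
      rintro L ⟨r, hr, hp, hh⟩; exact ⟨r, hr, hp.trans h, hh⟩
    · simp only [dif_neg hy]; exact fun L _ => Set.mem_univ _
  · have hy : ¬ Consistent Y := fun hy => hx (hy.mono' h)
    simp only [dif_neg hx, dif_neg hy]
    exact subset_refl _

lemma TIter_mono {σ : Type} {P : Set (Rule σ)} {m n : ℕ} (h : m ≤ n) :
    TIter P ∅ m ⊆ TIter P ∅ n := by
  induction n with
  | zero => cases Nat.le_zero.mp h; exact subset_refl _
  | succ n ih =>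
    rcases Nat.lt_or_ge m (n+1) with h' | h'
    · refine (ih (Nat.lt_succ_iff.mp h')).trans ?_
      clear ih h h'
      induction n with
      | zero => exact fun L hL => hL.elim
      | succ n ih => exact TOp_mono ih
    · cases Nat.le_antisymm h h'; exact subset_refl _

lemma closedUnder_Th {σ : Type} (P : Set (Rule σ)) : ClosedUnder P (Th P) := by
  intro r hr hp Y hY
  exact hY.2 r hr (fun M hM => hp hM Y hY)

lemma TIter_subset_of_answerSet {σ : Type} {P : Set (Rule σ)} {X : Set (Lit σ)}
    (hX : AnswerSet P X) (hc : Consistent X) (m : ℕ) :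
    TIter (Reduct P X) ∅ m ⊆ X := by
  have hcl : ClosedUnder (Reduct P X) X := by
    have h := closedUnder_Th (Reduct P X); rwa [hX] at h
  induction m with
  | zero => exact fun L hL => hL.elim
  | succ m ih =>
    intro L hL
    rw [TIter, TOp, dif_pos (hc.mono' ih)] at hL
    obtain ⟨r, hr, hp, hh⟩ := hL
    exact hh ▸ hcl r hr (hp.trans ih)

lemma embLit_ne_ap {α N : Type} (L : Lit (OAtom α N)) (n : N) :
    embLit L ≠ Lit.pos (XAtom.ap n) := by
  cases L with
  | pos a => cases a with
    | inl a => simp [embLit, Lit.map, embAtom]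
    | inr p => simp [embLit, Lit.map, embAtom]
  | neg a => simp [embLit, Lit.map]

/-- Key lemma: any rule of the reduct with head ap(n) or bl(n) has ok(n) in its
positive body. -/
lemma ok_mem_pbody {α N : Type} (P : OProgram α N) (X : Set (Lit (XAtom α N)))
    (r' : Rule (XAtom α N)) (hr' : r' ∈ Reduct (Tsl P) X) (n : N)
    (hh : r'.head = Lit.pos (XAtom.ap n) ∨ r'.head = Lit.pos (XAtom.bl n)) :
    Lit.pos (XAtom.ok n) ∈ r'.pbody := by
  obtain ⟨R, hR, -, rfl⟩ := hr'
  obtain ⟨r0, hr0, hcase⟩ := hR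
  rcases hcase with h | h | h | ⟨L, hL, h⟩ | ⟨L, hL, h⟩ | ⟨r1, hr1, h | h | h | h | ⟨r2, hr2, h⟩⟩ <;>
    subst h <;>
    simp only [reductRule, a1, a2, b1, b2, c1, c2, c3, c4, trR, asR, pLit] at hh ⊢
  · exfalso
    cases hr0h : r0.head with
    | pos a => rw [hr0h] at hh; cases a <;> simp [embLit, Lit.map, embAtom] at hh
    | neg a => rw [hr0h] at hh; simp [embLit, Lit.map] at hh
  · rcases hh with hh | hh
    · simp only [Lit.pos.injEq, XAtom.ap.injEq] at hh
      subst hh; exact Set.mem_insert _ _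
    · simp at hh
  · simp at hh
  · rcases hh with hh | hh
    · simp at hh
    · simp only [Lit.pos.injEq, XAtom.bl.injEq] at hh
      subst hh; exact Set.mem_singleton _
  · rcases hh with hh | hh
    · simp at hh
    · simp only [Lit.pos.injEq, XAtom.bl.injEq] at hh
      subst hh; exact Set.mem_insert _ _
  · simp at hh
  · simp at hh
  · simp at hh
  · simp at hh
  · simp at hh

/-- If ok(n_r) ∉ T_Ω^i(∅), then ap(n_r) ∉ T_Ω^j(∅) and
bl(n_r) ∉ T_Ω^k(∅) for all j, k < i + 2, where Ω = 𝒯(Π)ˣ. -/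
theorem ap_bl_not_before_ok {α N : Type} (P : OProgram α N)
    (X : Set (Lit (XAtom α N))) (hX : AnswerSet (Tsl P) X) (hc : Consistent X)
    (r : Rule (OAtom α N)) (hr : r ∈ P.rules) (i : ℕ)
    (hok : Lit.pos (XAtom.ok (P.nm r)) ∉ TIter (Reduct (Tsl P) X) ∅ i) :
    (∀ j < i + 2, Lit.pos (XAtom.ap (P.nm r)) ∉ TIter (Reduct (Tsl P) X) ∅ j) ∧
    (∀ k < i + 2, Lit.pos (XAtom.bl (P.nm r)) ∉ TIter (Reduct (Tsl P) X) ∅ k) := by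
  have key : ∀ (L : Lit (XAtom α N)),
      (L = Lit.pos (XAtom.ap (P.nm r)) ∨ L = Lit.pos (XAtom.bl (P.nm r))) →
      ∀ j < i + 2, L ∉ TIter (Reduct (Tsl P) X) ∅ j := by
    intro L hL j hj hmem
    cases j with
    | zero => exact hmem
    | succ m =>
      rw [TIter, TOp, dif_pos (hc.mono' (TIter_subset_of_answerSet hX hc m))] at hmem
      obtain ⟨r', hr', hp, hh⟩ := hmem
      have hok' : Lit.pos (XAtom.ok (P.nm r)) ∈ r'.pbody :=
        ok_mem_pbody P X r' hr' _
          (by rcases hL with rfl | rfl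
              · exact Or.inl hh
              · exact Or.inr hh)
      exact hok (TIter_mono (Nat.lt_succ_iff.mp (Nat.succ_lt_succ_iff.mp hj)) (hp hok'))
  exact ⟨fun j hj => key _ (Or.inl rfl) j hj, fun k hk => key _ (Or.inr rfl) k hk⟩
end Translation
end

section
/- Let Π be an ordered logic program, X a consistent answer set of 𝒯(Π), and ⟨r_i⟩_{i∈I} a grounded enumeration of the generating rules GR(𝒯(Π), X). Then for all rules r, r' ∈ Π with r ≺_X r': for every index i such that r_i is one of the translated rules a1(r), a2(r), b1(r,L), or b2(r,L), there exists an index j < i such that r_j is one of a1(r'), a2(r'), b1(r',L'), or b2(r',L') for some body literal L' of r'. -/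
attribute [local instance] Classical.propDecidable

section Translation

variable {α N : Type}

section AuxProof

variable {α N : Type}

lemma embLit_ne_ctrl (L : Lit (OAtom α N)) :
    (∀ n, embLit L ≠ Lit.pos (XAtom.ap n)) ∧ (∀ n, embLit L ≠ Lit.pos (XAtom.bl n)) ∧
    (∀ n, embLit L ≠ Lit.pos (XAtom.ok n)) ∧
    (∀ n m, embLit L ≠ Lit.pos (XAtom.ok2 n m)) := by
  rcases L with a | a <;> rcases a with a | ⟨s, t⟩ <;>
    simp [embLit, Lit.map, embAtom]

lemma th_closedUnder {σ : Type} (Q : Set (Rule σ)) : ClosedUnder Q (Th Q) :=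
  fun r hr hb => Set.mem_sInter.2 fun _ hY =>
    hY.2 r hr (hb.trans (Set.sInter_subset_of_mem hY))

lemma gr_head_mem {σ : Type} {P : Set (Rule σ)} {X : Set (Lit σ)}
    (hX : AnswerSet P X) {s : Rule σ} (hs : s ∈ GR P X) : s.head ∈ X := by
  obtain ⟨hsP, hnd, hpb⟩ := hs
  have hmem : reductRule s ∈ Reduct P X := ⟨s, hsP, hnd, rfl⟩
  have h2 : (reductRule s).pbody ⊆ Th (Reduct P X) := by
    rw [hX]; exact hpb
  have := th_closedUnder (Reduct P X) (reductRule s) hmem h2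
  rw [hX] at this
  exact this

variable {P : OProgram α N}

lemma tsl_head_ap {s : Rule (XAtom α N)} (hs : s ∈ Tsl P) {n : N}
    (hh : s.head = Lit.pos (XAtom.ap n)) :
    ∃ r0 ∈ P.rules, P.nm r0 = n ∧ s = a2 P.nm r0 := by
  obtain ⟨r0, hr0, hcase⟩ := hs
  have hne := embLit_ne_ctrl (α := α) (N := N) r0.head
  rcases hcase with h | h | h | ⟨L, hL, h⟩ | ⟨L, hL, h⟩ |
      ⟨r1, hr1, h | h | h | h | ⟨r2, hr2, h⟩⟩ <;> subst h <;>
    simp [a1, a2, b1, b2, c1, c2, c3, c4, trR, asR, pLit, hne.1] at hh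
  exact ⟨r0, hr0, hh, rfl⟩

lemma tsl_head_ok {s : Rule (XAtom α N)} (hs : s ∈ Tsl P) {n : N}
    (hh : s.head = Lit.pos (XAtom.ok n)) :
    ∃ r0 ∈ P.rules, P.nm r0 = n ∧ s = c1 P.rules P.nm r0 := by
  obtain ⟨r0, hr0, hcase⟩ := hs
  have hne := embLit_ne_ctrl (α := α) (N := N) r0.head
  rcases hcase with h | h | h | ⟨L, hL, h⟩ | ⟨L, hL, h⟩ |
      ⟨r1, hr1, h | h | h | h | ⟨r2, hr2, h⟩⟩ <;> subst h <;>
    simp [a1, a2, b1, b2, c1, c2, c3, c4, trR, asR, pLit, hne.2.2.1] at hh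
  exact ⟨r0, hr0, hh, rfl⟩

lemma tsl_head_ok2 {s : Rule (XAtom α N)} (hs : s ∈ Tsl P) {n m : N}
    (hh : s.head = Lit.pos (XAtom.ok2 n m)) :
    ∃ r0 ∈ P.rules, ∃ r1 ∈ P.rules, P.nm r0 = n ∧ P.nm r1 = m ∧
      (s = c2 P.nm r0 r1 ∨ s = c3 P.nm r0 r1 ∨ s = c4 P.nm r0 r1) := by
  obtain ⟨r0, hr0, hcase⟩ := hs
  have hne := embLit_ne_ctrl (α := α) (N := N) r0.head
  rcases hcase with h | h | h | ⟨L, hL, h⟩ | ⟨L, hL, h⟩ |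
      ⟨r1, hr1, h | h | h | h | ⟨r2, hr2, h⟩⟩ <;> subst h <;>
    simp [a1, a2, b1, b2, c1, c2, c3, c4, trR, asR, pLit, hne.2.2.2] at hh
  · exact ⟨r0, hr0, r1, hr1, hh.1, hh.2, Or.inl rfl⟩
  · exact ⟨r0, hr0, r1, hr1, hh.1, hh.2, Or.inr (Or.inl rfl)⟩
  · exact ⟨r0, hr0, r1, hr1, hh.1, hh.2, Or.inr (Or.inr rfl)⟩

lemma tsl_head_bl {s : Rule (XAtom α N)} (hs : s ∈ Tsl P) {n : N}
    (hh : s.head = Lit.pos (XAtom.bl n)) :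
    ∃ r0 ∈ P.rules, P.nm r0 = n ∧
      ((∃ L ∈ r0.pbody, s = b1 P.nm r0 L) ∨ (∃ L ∈ r0.nbody, s = b2 P.nm r0 L)) := by
  obtain ⟨r0, hr0, hcase⟩ := hs
  have hne := embLit_ne_ctrl (α := α) (N := N) r0.head
  rcases hcase with h | h | h | ⟨L, hL, h⟩ | ⟨L, hL, h⟩ |
      ⟨r1, hr1, h | h | h | h | ⟨r2, hr2, h⟩⟩ <;> subst h <;>
    simp [a1, a2, b1, b2, c1, c2, c3, c4, trR, asR, pLit, hne.2.1] at hh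
  · exact ⟨r0, hr0, hh, Or.inl ⟨L, hL, rfl⟩⟩
  · exact ⟨r0, hr0, hh, Or.inr ⟨L, hL, rfl⟩⟩

end AuxProof

/-- In any grounded enumeration of the generating rules of a
consistent answer set X of 𝒯(Π), the translated rules a1/a2/b1/b2 for r come
after some translated rule a1/a2/b1/b2 for r', whenever r ≺_X r'. -/
theorem prec_respected_in_grounded_enum {α N I : Type} [LinearOrder I]
    (P : OProgram α N) (X : Set (Lit (XAtom α N)))
    (hX : AnswerSet (Tsl P) X) (hc : Consistent X)
    (e : I → Rule (XAtom α N))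
    (he : IsEnum e (GR (Tsl P) X)) (hg : Grounded e)
    (r r' : Rule (OAtom α N)) (hr : r ∈ P.rules) (hr' : r' ∈ P.rules)
    (hprec : PrecRel P.nm X r r') :
    ∀ i : I,
      (e i = a1 P.nm r ∨ e i = a2 P.nm r ∨
        (∃ L ∈ r.pbody, e i = b1 P.nm r L) ∨ (∃ L ∈ r.nbody, e i = b2 P.nm r L)) →
      ∃ j < i,
        (e j = a1 P.nm r' ∨ e j = a2 P.nm r' ∨
          (∃ L ∈ r'.pbody, e j = b1 P.nm r' L) ∨
          (∃ L ∈ r'.nbody, e j = b2 P.nm r' L)) := by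
  have hrange : ∀ k : I, e k ∈ GR (Tsl P) X := by
    intro k; rw [← he.2]; exact ⟨k, rfl⟩
  have hTsl : ∀ k : I, e k ∈ Tsl P := fun k => (hrange k).1
  have hnd : ∀ k : I, ¬ Defeated (e k) X := fun k => (hrange k).2.1
  have hheads : ∀ k : I, (e k).head ∈ X := fun k => gr_head_mem hX (hrange k)
  have hconsp : ∀ k : I, Consistent {L | ∃ j < k, (e j).head = L} := by
    intro k a h
    obtain ⟨⟨j1, _, h1⟩, ⟨j2, _, h2⟩⟩ := h
    exact hc a ⟨h1 ▸ hheads j1, h2 ▸ hheads j2⟩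
  have hfind : ∀ k : I, ∀ L ∈ (e k).pbody, ∃ j < k, (e j).head = L := fun k L hL =>
    ((hg k).resolve_left (not_not_intro (hconsp k))) hL
  -- key step: if ok(n_r) occurs in the positive body at stage k, we are done below k
  have key : ∀ k : I, Lit.pos (XAtom.ok (P.nm r)) ∈ (e k).pbody →
      ∃ j < k,
        (e j = a1 P.nm r' ∨ e j = a2 P.nm r' ∨
          (∃ L ∈ r'.pbody, e j = b1 P.nm r' L) ∨
          (∃ L ∈ r'.nbody, e j = b2 P.nm r' L)) := by
    intro k hok
    obtain ⟨j, hjk, hj⟩ := hfind k _ hok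
    obtain ⟨r0, hr0, hn0, hc1⟩ := tsl_head_ok (hTsl j) hj
    have hr0r : r0 = r := P.inj hr0 hr hn0
    subst hr0r
    have hmem : Lit.pos (XAtom.ok2 (P.nm r0) (P.nm r')) ∈ (e j).pbody := by
      rw [hc1]; exact ⟨r', hr', rfl⟩
    obtain ⟨k2, hk2, hk2h⟩ := hfind j _ hmem
    obtain ⟨r1, hr1, r2, hr2, hn1, hn2, hcc⟩ := tsl_head_ok2 (hTsl k2) hk2h
    have e1 : r1 = r0 := P.inj hr1 hr hn1
    subst e1
    have e2 : r2 = r' := P.inj hr2 hr' hn2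
    subst e2
    rcases hcc with h | h | h
    · exfalso
      exact hnd k2 ⟨pLit (P.nm r1) (P.nm r2), by rw [h]; exact ⟨rfl, hprec⟩⟩
    · have hap : Lit.pos (XAtom.ap (P.nm r2)) ∈ (e k2).pbody := by
        rw [h]; exact Or.inr rfl
      obtain ⟨m, hm, hmh⟩ := hfind k2 _ hap
      obtain ⟨r3, hr3, hn3, ha2⟩ := tsl_head_ap (hTsl m) hmh
      have e3 : r3 = r2 := P.inj hr3 hr' hn3
      subst e3
      exact ⟨m, lt_trans (lt_trans hm hk2) hjk, Or.inr (Or.inl ha2)⟩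
    · have hbl : Lit.pos (XAtom.bl (P.nm r2)) ∈ (e k2).pbody := by
        rw [h]; exact Or.inr rfl
      obtain ⟨m, hm, hmh⟩ := hfind k2 _ hbl
      obtain ⟨r3, hr3, hn3, hb⟩ := tsl_head_bl (hTsl m) hmh
      have e3 : r3 = r2 := P.inj hr3 hr' hn3
      subst e3
      refine ⟨m, lt_trans (lt_trans hm hk2) hjk, ?_⟩
      rcases hb with hb | hb
      · exact Or.inr (Or.inr (Or.inl hb))
      · exact Or.inr (Or.inr (Or.inr hb))
  intro i hi
  rcases hi with h | h | ⟨L, hL, h⟩ | ⟨L, hL, h⟩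
  · -- e i = a1 r : find the a2 r rule below, then use key
    have hap : Lit.pos (XAtom.ap (P.nm r)) ∈ (e i).pbody := by
      rw [h]; exact rfl
    obtain ⟨j, hji, hjh⟩ := hfind i _ hap
    obtain ⟨r0, hr0, hn0, ha2⟩ := tsl_head_ap (hTsl j) hjh
    have e0 : r0 = r := P.inj hr0 hr hn0
    subst e0
    have hok : Lit.pos (XAtom.ok (P.nm r0)) ∈ (e j).pbody := by
      rw [ha2]; exact Set.mem_insert _ _
    obtain ⟨m, hmj, hgoal⟩ := key j hok
    exact ⟨m, lt_trans hmj hji, hgoal⟩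
  · exact key i (by rw [h]; exact Set.mem_insert _ _)
  · exact key i (by rw [h]; exact rfl)
  · exact key i (by rw [h]; exact Or.inl rfl)
end Translation
end
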